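/- Let p be a symmetric probability tensor of order q satisfying the constant-degree condition with degree d, and let Q = DΠ be the associated signal matrix. Then every eigenvalue of Q (i.e., every complex root of its characteristic polynomial) is real, and every eigenvalue λ of Q satisfies λ ≥ −d/(q−1). -/

import Mathlib

open Matrix Finset

theorem sum_comp_perm' {q r : ℕ} (s : Equiv.Perm (Fin q)) (H : (Fin q → Fin r) → ℝ) :
    ∑ g : Fin q → Fin r, H (g ∘ s) = ∑ g : Fin q → Fin r, H g := by
  apply Fintype.sum_bijective (fun g : Fin q → Fin r => g ∘ s)
  · exact (Equiv.arrowCongr s.symm (Equiv.refl (Fin r))).bijective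
  · intro g; rfl

theorem exists_perm_two' {n : ℕ} (x y a b : Fin n) (hxy : x ≠ y) (hab : a ≠ b) :
    ∃ s : Equiv.Perm (Fin n), s x = a ∧ s y = b := by
  refine ⟨(Equiv.swap x a).trans (Equiv.swap (Equiv.swap x a y) b), ?_, ?_⟩
  · simp only [Equiv.trans_apply, Equiv.swap_apply_left]
    apply Equiv.swap_apply_of_ne_of_ne _ hab
    rcases eq_or_ne y a with h | h
    · subst h
      rw [Equiv.swap_apply_right]
      exact fun hc => hxy (hc ▸ rfl)
    · rw [Equiv.swap_apply_of_ne_of_ne (Ne.symm hxy) h]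
      exact fun hc => h (hc ▸ rfl)
  · simp only [Equiv.trans_apply, Equiv.swap_apply_left]

theorem eig_of_root' {n : ℕ} (μ : ℂ) (M : Matrix (Fin n) (Fin n) ℂ) (h : M.charpoly.IsRoot μ) :
    ∃ v, v ≠ 0 ∧ M *ᵥ v = μ • v := by
  have h0 : ((Matrix.scalar (Fin n) μ) - M).det = 0 := by
    have := eval_det (charmatrix M) μ
    rw [matPolyEquiv_charmatrix] at this
    simp only [Polynomial.eval_sub, Polynomial.eval_X, Polynomial.eval_C] at this
    rw [← this]
    exact h
  obtain ⟨v, hv, hv2⟩ := (Matrix.exists_mulVec_eq_zero_iff).2 h0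
  refine ⟨v, hv, ?_⟩
  have h1 : (Matrix.scalar (Fin n) μ) *ᵥ v - M *ᵥ v = 0 := by
    rw [← Matrix.sub_mulVec]; exact hv2
  have h2 : (Matrix.scalar (Fin n) μ) *ᵥ v = μ • v := by
    ext i
    simp [Matrix.scalar, Matrix.mulVec_diagonal, Pi.algebraMap_apply]
  rw [h2, sub_eq_zero] at h1
  exact h1.symm

/-- For a symmetric probability tensor `p` of order `q ≥ 2` satisfying the
constant-degree condition with degree `d`, every complex root of the characteristic
polynomial of the signal matrix `Q = D Π` is real and at least `-d/(q-1)`. -/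
theorem statement1
    (r : ℕ) (hr : 1 ≤ r)
    (π : Fin r → ℝ) (hπpos : ∀ i, 0 < π i) (hπsum : ∑ i, π i = 1)
    (q : ℕ) (hq : 2 ≤ q)
    (p : (Fin q → Fin r) → ℝ)
    (hp_nonneg : ∀ g, 0 ≤ p g)
    (hp_symm : ∀ (g : Fin q → Fin r) (s : Equiv.Perm (Fin q)), p (g ∘ s) = p g)
    (d : ℝ) (hd : 0 ≤ d)
    (hdeg : ∀ i : Fin r,
      (∑ g : Fin q → Fin r,
        if g ⟨0, by omega⟩ = i then
          p g * ∏ ℓ ∈ Finset.univ.erase (⟨0, by omega⟩ : Fin q), π (g ℓ)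
        else 0) = d)
    (D : Matrix (Fin r) (Fin r) ℝ)
    (hD : ∀ i j, D i j =
      ∑ g : Fin q → Fin r,
        if g ⟨0, by omega⟩ = i ∧ g ⟨1, by omega⟩ = j then
          p g *
            ∏ ℓ ∈ (Finset.univ.erase (⟨0, by omega⟩ : Fin q)).erase (⟨1, by omega⟩ : Fin q),
              π (g ℓ)
        else 0)
    (Q : Matrix (Fin r) (Fin r) ℝ) (hQ : Q = D * Matrix.diagonal π) :
    ∀ μ : ℂ, ((Q.map (Complex.ofReal)).charpoly).IsRoot μ →
      μ.im = 0 ∧ -(d / ((q : ℝ) - 1)) ≤ μ.re := by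
  intro μ hroot
  -- notation
  set i0 : Fin q := ⟨0, by omega⟩ with hi0
  set i1 : Fin q := ⟨1, by omega⟩ with hi1
  have hne01 : i0 ≠ i1 := by simp [hi0, hi1, Fin.ext_iff]
  have hq1 : (0:ℝ) < (q:ℝ) - 1 := by
    have : (2:ℝ) ≤ (q:ℝ) := by exact_mod_cast hq
    linarith
  have hqpos : (0:ℝ) < (q:ℝ) := by linarith
  set F : (Fin q → Fin r) → ℝ := fun g => p g * ∏ ℓ, π (g ℓ) with hF
  have hFcomp : ∀ (s : Equiv.Perm (Fin q)) (g : Fin q → Fin r), F (g ∘ s) = F g := by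
    intro s g
    simp only [hF]
    rw [hp_symm g s]
    congr 1
    exact Equiv.prod_comp s (fun ℓ => π (g ℓ))
  have hFnonneg : ∀ g, 0 ≤ F g := by
    intro g
    exact mul_nonneg (hp_nonneg g) (Finset.prod_nonneg fun ℓ _ => (hπpos _).le)
  -- D is symmetric
  have hDsymm : ∀ i j, D i j = D j i := by
    intro i j
    have hcomp := sum_comp_perm' (Equiv.swap i0 i1)
      (fun g => if g i0 = i ∧ g i1 = j then
        p g * ∏ ℓ ∈ (Finset.univ.erase i0).erase i1, π (g ℓ) else 0)
    rw [hD i j, hD j i, ← hcomp]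
    apply Finset.sum_congr rfl
    intro g _
    have h1 : (g ∘ Equiv.swap i0 i1) i0 = g i1 := by
      simp [Equiv.swap_apply_left]
    have h2 : (g ∘ Equiv.swap i0 i1) i1 = g i0 := by
      simp [Equiv.swap_apply_right]
    simp only [h1, h2]
    have h3 : p (g ∘ Equiv.swap i0 i1) = p g := hp_symm g _
    have h4 : ∏ ℓ ∈ (Finset.univ.erase i0).erase i1, π ((g ∘ Equiv.swap i0 i1) ℓ)
        = ∏ ℓ ∈ (Finset.univ.erase i0).erase i1, π (g ℓ) := by
      apply Finset.prod_congr rfl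
      intro ℓ hℓ
      have hℓ1 : ℓ ≠ i1 := (Finset.mem_erase.1 hℓ).1
      have hℓ0 : ℓ ≠ i0 := (Finset.mem_erase.1 (Finset.mem_erase.1 hℓ).2).1
      simp [Function.comp_apply, Equiv.swap_apply_of_ne_of_ne hℓ0 hℓ1]
    rw [h3, h4]
    exact if_congr and_comm rfl rfl
  -- The key combinatorial inequality
  have key : ∀ z : Fin r → ℝ,
      0 ≤ d * (∑ i, π i * z i ^ 2)
        + ((q:ℝ) - 1) * (∑ i, ∑ j, D i j * (π i * π j * (z i * z j))) := by
    intro z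
    set T : Fin q → Fin q → ℝ := fun a b => ∑ g, F g * (z (g a) * z (g b)) with hTdef
    have hT : ∀ (s : Equiv.Perm (Fin q)) (a b : Fin q), T (s a) (s b) = T a b := by
      intro s a b
      have hcomp := sum_comp_perm' s (fun g => F g * (z (g a) * z (g b)))
      rw [hTdef]
      simp only
      rw [← hcomp]
      apply Finset.sum_congr rfl
      intro g _
      simp only [Function.comp_apply]
      rw [hFcomp]
    have hTaa : ∀ a, T a a = T i0 i0 := by
      intro a
      have := hT (Equiv.swap i0 a) i0 i0
      rwa [Equiv.swap_apply_left] at this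
    have hTab : ∀ a b, a ≠ b → T a b = T i0 i1 := by
      intro a b hab
      obtain ⟨s, hs0, hs1⟩ := exists_perm_two' i0 i1 a b hne01 hab
      have := hT s i0 i1
      rwa [hs0, hs1] at this
    -- T i0 i0 = d * ∑ π z²
    have hT00 : T i0 i0 = d * ∑ i, π i * z i ^ 2 := by
      have step : d * ∑ i, π i * z i ^ 2
          = ∑ i, (π i * z i ^ 2) *
            (∑ g : Fin q → Fin r, if g i0 = i then
              p g * ∏ ℓ ∈ Finset.univ.erase i0, π (g ℓ) else 0) := by
        rw [Finset.mul_sum]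
        apply Finset.sum_congr rfl
        intro i _
        rw [hdeg i]
        ring
      rw [step]
      have step2 : ∀ i, (π i * z i ^ 2) *
            (∑ g : Fin q → Fin r, if g i0 = i then
              p g * ∏ ℓ ∈ Finset.univ.erase i0, π (g ℓ) else 0)
          = ∑ g : Fin q → Fin r, if g i0 = i then
              (π i * z i ^ 2) * (p g * ∏ ℓ ∈ Finset.univ.erase i0, π (g ℓ)) else 0 := by
        intro i
        rw [Finset.mul_sum]
        apply Finset.sum_congr rfl
        intro g _
        split <;> simp
      simp only [step2]
      rw [Finset.sum_comm]
      rw [hTdef]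
      apply Finset.sum_congr rfl
      intro g _
      rw [Finset.sum_ite_eq Finset.univ (g i0)
        (fun i => (π i * z i ^ 2) * (p g * ∏ ℓ ∈ Finset.univ.erase i0, π (g ℓ)))]
      simp only [Finset.mem_univ, if_true]
      rw [hF]
      simp only
      rw [← Finset.mul_prod_erase Finset.univ (fun ℓ => π (g ℓ)) (Finset.mem_univ i0)]
      ring
    -- T i0 i1 = quadratic form in D
    have hT01 : T i0 i1 = ∑ i, ∑ j, D i j * (π i * π j * (z i * z j)) := by
      have step : ∑ i, ∑ j, D i j * (π i * π j * (z i * z j))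
          = ∑ i, ∑ j, ∑ g : Fin q → Fin r,
              if g i1 = j then (if g i0 = i then
                (p g * ∏ ℓ ∈ (Finset.univ.erase i0).erase i1, π (g ℓ))
                  * (π i * π j * (z i * z j)) else 0) else 0 := by
        apply Finset.sum_congr rfl; intro i _
        apply Finset.sum_congr rfl; intro j _
        rw [hD i j, Finset.sum_mul]
        apply Finset.sum_congr rfl; intro g _
        by_cases h1 : g i0 = i <;> by_cases h2 : g i1 = j <;> simp [h1, h2]
      rw [step]
      have comm3 : ∀ (h : Fin r → Fin r → (Fin q → Fin r) → ℝ),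
          ∑ i, ∑ j, ∑ g : Fin q → Fin r, h i j g
            = ∑ g : Fin q → Fin r, ∑ i, ∑ j, h i j g := by
        intro h
        calc ∑ i, ∑ j, ∑ g : Fin q → Fin r, h i j g
            = ∑ i, ∑ g : Fin q → Fin r, ∑ j, h i j g := by
              apply Finset.sum_congr rfl; intro i _; exact Finset.sum_comm
          _ = ∑ g : Fin q → Fin r, ∑ i, ∑ j, h i j g := Finset.sum_comm
      rw [comm3]
      rw [hTdef]
      apply Finset.sum_congr rfl
      intro g _
      simp only [Finset.sum_ite_eq, Finset.mem_univ, if_true]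
      have hmem : i1 ∈ Finset.univ.erase i0 :=
        Finset.mem_erase.2 ⟨Ne.symm hne01, Finset.mem_univ _⟩
      rw [hF]
      simp only
      rw [← Finset.mul_prod_erase Finset.univ (fun ℓ => π (g ℓ)) (Finset.mem_univ i0),
        ← Finset.mul_prod_erase (Finset.univ.erase i0) (fun ℓ => π (g ℓ)) hmem]
      ring
    -- expansion of the nonnegative square
    have hpos : 0 ≤ ∑ g : Fin q → Fin r, F g * (∑ a, z (g a)) ^ 2 :=
      Finset.sum_nonneg fun g _ => mul_nonneg (hFnonneg g) (sq_nonneg _)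
    have hexp : ∑ g : Fin q → Fin r, F g * (∑ a, z (g a)) ^ 2 = ∑ a, ∑ b, T a b := by
      have step1 : ∑ g : Fin q → Fin r, F g * (∑ a, z (g a)) ^ 2
          = ∑ g : Fin q → Fin r, ∑ a, ∑ b, F g * (z (g a) * z (g b)) := by
        apply Finset.sum_congr rfl
        intro g _
        rw [sq, Finset.sum_mul_sum, Finset.mul_sum]
        apply Finset.sum_congr rfl
        intro a _
        rw [Finset.mul_sum]
      rw [step1, Finset.sum_comm]
      apply Finset.sum_congr rfl
      intro a _
      exact Finset.sum_comm
    have hcount : ∑ a, ∑ b, T a b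
        = (q : ℝ) * T i0 i0 + ((q : ℝ) * ((q : ℝ) - 1)) * T i0 i1 := by
      have step1 : ∑ a, ∑ b, T a b
          = ∑ a : Fin q, (((q : ℝ)) * T i0 i1 + (T i0 i0 - T i0 i1)) := by
        apply Finset.sum_congr rfl
        intro a _
        have : ∀ b : Fin q, T a b = T i0 i1 + (if a = b then T i0 i0 - T i0 i1 else 0) := by
          intro b
          by_cases h : a = b
          · subst h; rw [hTaa a]; simp
          · rw [hTab a b h]; simp [h]
        simp only [this]
        rw [Finset.sum_add_distrib, Finset.sum_const, Finset.sum_ite_eq, Finset.card_univ,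
          Fintype.card_fin]
        simp [nsmul_eq_mul]
      rw [step1, Finset.sum_const, Finset.card_univ, Fintype.card_fin, nsmul_eq_mul]
      ring
    have hfinal : 0 ≤ (q : ℝ) * (d * (∑ i, π i * z i ^ 2)
        + ((q:ℝ) - 1) * (∑ i, ∑ j, D i j * (π i * π j * (z i * z j)))) := by
      have := hpos
      rw [hexp, hcount, hT00, hT01] at this
      nlinarith [this]
    exact nonneg_of_mul_nonneg_right hfinal hqpos
  -- symmetrized matrix S
  set sπ : Fin r → ℝ := fun i => Real.sqrt (π i) with hsπ
  have hsπpos : ∀ i, 0 < sπ i := fun i => Real.sqrt_pos.2 (hπpos i)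
  have hsπsq : ∀ i, sπ i * sπ i = π i := fun i => Real.mul_self_sqrt (hπpos i).le
  set S : Fin r → Fin r → ℝ := fun i j => sπ i * D i j * sπ j with hS
  have hSsymm : ∀ i j, S i j = S j i := by
    intro i j
    simp only [hS]
    rw [hDsymm i j]
    ring
  -- real quadratic form bound for S
  have hSform : ∀ x : Fin r → ℝ,
      -(d / ((q : ℝ) - 1)) * (∑ i, x i ^ 2) ≤ ∑ i, ∑ j, S i j * (x i * x j) := by
    intro x
    set z : Fin r → ℝ := fun i => x i / sπ i with hz
    have hzx : ∀ i, sπ i * z i = x i := by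
      intro i
      rw [hz]
      exact mul_div_cancel₀ (x i) (hsπpos i).ne'
    have hW : ∑ i, π i * z i ^ 2 = ∑ i, x i ^ 2 := by
      apply Finset.sum_congr rfl
      intro i _
      rw [← hzx i, ← hsπsq i]
      ring
    have hY : ∑ i, ∑ j, D i j * (π i * π j * (z i * z j))
        = ∑ i, ∑ j, S i j * (x i * x j) := by
      apply Finset.sum_congr rfl; intro i _
      apply Finset.sum_congr rfl; intro j _
      rw [← hzx i, ← hzx j, ← hsπsq i, ← hsπsq j, hS]
      ring
    have hk := key z
    rw [hW, hY] at hk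
    have e : ((q:ℝ) - 1) * (d / ((q:ℝ) - 1) * (∑ i, x i ^ 2)
        + ∑ i, ∑ j, S i j * (x i * x j))
        = d * (∑ i, x i ^ 2) + ((q:ℝ) - 1) * ∑ i, ∑ j, S i j * (x i * x j) := by
      field_simp
    have h2 : 0 ≤ ((q:ℝ) - 1) * (d / ((q:ℝ) - 1) * (∑ i, x i ^ 2)
        + ∑ i, ∑ j, S i j * (x i * x j)) := by
      rw [e]
      exact hk
    have h3 := nonneg_of_mul_nonneg_right h2 hq1
    linarith
  -- eigenvector of Q over ℂ
  obtain ⟨v, hv0, hv⟩ := eig_of_root' μ (Q.map Complex.ofReal) hroot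
  have hvi : ∀ i, (∑ j, ((Q i j : ℝ) : ℂ) * v j) = μ * v i := by
    intro i
    have := congrFun hv i
    simpa [Matrix.mulVec, dotProduct, Matrix.map_apply] using this
  set w : Fin r → ℂ := fun i => (sπ i : ℂ) * v i with hw
  have hwe : ∀ i, (∑ j, ((S i j : ℝ) : ℂ) * w j) = μ * w i := by
    intro i
    have hQij : ∀ j, Q i j = D i j * π j := by
      intro j
      rw [hQ, Matrix.mul_diagonal]
    calc ∑ j, ((S i j : ℝ) : ℂ) * w j
        = (sπ i : ℂ) * ∑ j, ((Q i j : ℝ) : ℂ) * v j := by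
          rw [Finset.mul_sum]
          apply Finset.sum_congr rfl
          intro j _
          rw [hQij j, hS, hw]
          simp only
          have hc : ((sπ j : ℝ) : ℂ) * ((sπ j : ℝ) : ℂ) = ((π j : ℝ) : ℂ) := by
            exact_mod_cast congrArg (fun t : ℝ => (t : ℂ)) (hsπsq j)
          push_cast
          linear_combination ((sπ i : ℂ) * ((D i j : ℝ) : ℂ) * v j) * hc
      _ = μ * w i := by rw [hvi i, hw]; ring
  -- the sesquilinear form
  set N : ℝ := ∑ i, Complex.normSq (w i) with hN
  have hNpos : 0 < N := by
    have : ∃ i, v i ≠ 0 := by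
      by_contra h
      push_neg at h
      exact hv0 (funext fun i => h i)
    obtain ⟨i, hi⟩ := this
    have hwi : w i ≠ 0 := by
      rw [hw]
      exact mul_ne_zero (by exact_mod_cast (hsπpos i).ne') hi
    apply Finset.sum_pos' (fun j _ => Complex.normSq_nonneg _)
    exact ⟨i, Finset.mem_univ i, Complex.normSq_pos.2 hwi⟩
  set sform : ℂ := ∑ i, ∑ j, (starRingEnd ℂ) (w i) * (((S i j : ℝ) : ℂ) * w j) with hsf
  have hsval : sform = μ * (N : ℂ) := by
    rw [hsf]
    calc ∑ i, ∑ j, (starRingEnd ℂ) (w i) * (((S i j : ℝ) : ℂ) * w j)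
        = ∑ i, (starRingEnd ℂ) (w i) * ∑ j, ((S i j : ℝ) : ℂ) * w j := by
          apply Finset.sum_congr rfl
          intro i _
          rw [Finset.mul_sum]
      _ = ∑ i, μ * ((starRingEnd ℂ) (w i) * w i) := by
          apply Finset.sum_congr rfl
          intro i _
          rw [hwe i]
          ring
      _ = μ * ∑ i, ((Complex.normSq (w i) : ℝ) : ℂ) := by
          rw [← Finset.mul_sum]
          congr 1
          apply Finset.sum_congr rfl
          intro i _
          rw [Complex.normSq_eq_conj_mul_self]
      _ = μ * (N : ℂ) := by
          rw [hN]
          push_cast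
          ring
  -- real and imaginary parts
  set a : Fin r → ℝ := fun i => (w i).re with ha
  set b : Fin r → ℝ := fun i => (w i).im with hb
  have hterm_re : ∀ i j, ((starRingEnd ℂ) (w i) * (((S i j : ℝ) : ℂ) * w j)).re
      = S i j * (a i * a j) + S i j * (b i * b j) := by
    intro i j
    simp only [ha, hb, Complex.mul_re, Complex.mul_im, Complex.conj_re, Complex.conj_im,
      Complex.ofReal_re, Complex.ofReal_im]
    ring
  have hterm_im : ∀ i j, ((starRingEnd ℂ) (w i) * (((S i j : ℝ) : ℂ) * w j)).im
      = S i j * (a i * b j) - S i j * (b i * a j) := by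
    intro i j
    simp only [ha, hb, Complex.mul_re, Complex.mul_im, Complex.conj_re, Complex.conj_im,
      Complex.ofReal_re, Complex.ofReal_im]
    ring
  have hsre : sform.re = (∑ i, ∑ j, S i j * (a i * a j)) + ∑ i, ∑ j, S i j * (b i * b j) := by
    rw [hsf, Complex.re_sum]
    rw [← Finset.sum_add_distrib]
    apply Finset.sum_congr rfl
    intro i _
    rw [Complex.re_sum, ← Finset.sum_add_distrib]
    apply Finset.sum_congr rfl
    intro j _
    exact hterm_re i j
  have hsim : sform.im = 0 := by
    have h1 : sform.im = ∑ i, ∑ j, (S i j * (a i * b j) - S i j * (b i * a j)) := by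
      rw [hsf, Complex.im_sum]
      apply Finset.sum_congr rfl
      intro i _
      rw [Complex.im_sum]
      apply Finset.sum_congr rfl
      intro j _
      exact hterm_im i j
    have h2 : ∑ i, ∑ j, (S i j * (a i * b j) - S i j * (b i * a j))
        = -∑ i, ∑ j, (S i j * (a i * b j) - S i j * (b i * a j)) := by
      nth_rewrite 1 [Finset.sum_comm]
      rw [← Finset.sum_neg_distrib]
      apply Finset.sum_congr rfl
      intro i _
      rw [← Finset.sum_neg_distrib]
      apply Finset.sum_congr rfl
      intro j _
      rw [hSsymm j i]
      ring
    rw [h1]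
    linarith [h2]
  -- conclude
  have him : μ.im = 0 := by
    have : (μ * (N : ℂ)).im = μ.im * N := by
      simp [Complex.mul_im]
    rw [← hsval, hsim] at this
    have := this.symm
    exact (mul_eq_zero.1 this).resolve_right (ne_of_gt hNpos)
  constructor
  · exact him
  · have hre : sform.re = μ.re * N := by
      rw [hsval]
      simp [Complex.mul_re]
    have hNsplit : N = (∑ i, a i ^ 2) + ∑ i, b i ^ 2 := by
      rw [hN, ← Finset.sum_add_distrib]
      apply Finset.sum_congr rfl
      intro i _
      rw [Complex.normSq_apply, ha, hb]
      ring
    have hb1 := hSform a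
    have hb2 := hSform b
    have hbound : -(d / ((q : ℝ) - 1)) * N ≤ sform.re := by
      rw [hsre, hNsplit]
      linarith [hb1, hb2]
    rw [hre] at hbound
    have := le_of_mul_le_mul_right hbound hNpos
    exact this
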